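/- For every n ≥ 4, the cycle and path satisfy φ(C_n) ≥ φ(P_{n-1}) + 1, with equality if and only if n = 6. -/

import Mathlib

open SimpleGraph

/-- A dissociation set: a set of vertices inducing a subgraph of maximum degree at most 1,
i.e., every vertex of `S` has at most one neighbour inside `S`. -/
def IsDissoc {V : Type*} (G : SimpleGraph V) (S : Set V) : Prop :=
  ∀ v ∈ S, {u | u ∈ S ∧ G.Adj v u}.Subsingleton

/-- A maximal dissociation set: a dissociation set not properly contained in another one. -/
def IsMaxDissoc {V : Type*} (G : SimpleGraph V) (S : Set V) : Prop :=
  IsDissoc G S ∧ ∀ T : Set V, IsDissoc G T → S ⊆ T → S = T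

/-- `phi G` is the number of maximal dissociation sets of `G`. -/
noncomputable def phi {V : Type*} (G : SimpleGraph V) : ℕ :=
  {S : Set V | IsMaxDissoc G S}.ncard

/-- The number of maximal dissociation sets of `G` not containing `u`. -/
noncomputable def phiNot {V : Type*} (G : SimpleGraph V) (u : V) : ℕ :=
  {S : Set V | IsMaxDissoc G S ∧ u ∉ S}.ncard

/-- The number of maximal dissociation sets `S` of `G` with `u ∈ S` and
`u` of degree 0 in the subgraph induced by `S`. -/
noncomputable def phi0 {V : Type*} (G : SimpleGraph V) (u : V) : ℕ :=
  {S : Set V | IsMaxDissoc G S ∧ u ∈ S ∧ ∀ x ∈ S, ¬ G.Adj u x}.ncard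

/-- The number of maximal dissociation sets `S` of `G` with `u ∈ S` and
`u` of degree 1 in the subgraph induced by `S`. -/
noncomputable def phi1 {V : Type*} (G : SimpleGraph V) (u : V) : ℕ :=
  {S : Set V | IsMaxDissoc G S ∧ u ∈ S ∧ ∃! x, x ∈ S ∧ G.Adj u x}.ncard

/-- A unicyclic graph: a connected graph whose number of edges equals its number of vertices
(equivalently, a connected graph with exactly one cycle). -/
def IsUnicyclic {V : Type*} [Fintype V] (G : SimpleGraph V) : Prop :=
  G.Connected ∧ G.edgeSet.ncard = Fintype.card V

/-- The tree `T(p,q)` (for `q ≤ p`): obtained from the star `K_{1,p}` by subdividing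
exactly `q` of its edges.  The centre is `Sum.inl ()`, the `p` neighbours of the centre are
`Sum.inr (Sum.inl i)`, and for `j < q` the vertex `Sum.inr (Sum.inr j)` is the subdivision
pendant attached to the `j`-th neighbour.  It has `1 + p + q` vertices. -/
def treeT (p q : ℕ) (h : q ≤ p) : SimpleGraph (Unit ⊕ Fin p ⊕ Fin q) :=
  SimpleGraph.fromRel fun a b =>
    (∃ i : Fin p, a = Sum.inl () ∧ b = Sum.inr (Sum.inl i)) ∨
    (∃ j : Fin q, a = Sum.inr (Sum.inl (Fin.castLE h j)) ∧ b = Sum.inr (Sum.inr j))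

/-- The unicyclic graph `U(p,q)` (for `q ≤ p`): obtained by identifying one vertex of the
triangle `K₃` with the centre of `T(p,q)`.  The centre is `Sum.inl ()`, the two other triangle
vertices are `Sum.inr (Sum.inl 0)` and `Sum.inr (Sum.inl 1)`, and the copy of `T(p,q)` sits on
the remaining vertices.  It has `3 + p + q` vertices. -/
def graphU (p q : ℕ) (h : q ≤ p) : SimpleGraph (Unit ⊕ Fin 2 ⊕ Fin p ⊕ Fin q) :=
  SimpleGraph.fromRel fun a b =>
    (a = Sum.inl () ∧ b = Sum.inr (Sum.inl 0)) ∨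
    (a = Sum.inl () ∧ b = Sum.inr (Sum.inl 1)) ∨
    (a = Sum.inr (Sum.inl 0) ∧ b = Sum.inr (Sum.inl 1)) ∨
    (∃ i : Fin p, a = Sum.inl () ∧ b = Sum.inr (Sum.inr (Sum.inl i))) ∨
    (∃ j : Fin q, a = Sum.inr (Sum.inr (Sum.inl (Fin.castLE h j))) ∧
      b = Sum.inr (Sum.inr (Sum.inr j)))

/-- The unicyclic graph obtained from the cycle `C_r` by attaching one pendant vertex
`Sum.inr j` to the cycle vertex `Sum.inl (f j)` for each `j : Fin t`.  For injective `f`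
this is a member of the class `𝒰_{r,t}`. -/
def graphUrtF (r t : ℕ) (f : Fin t → Fin r) : SimpleGraph (Fin r ⊕ Fin t) :=
  SimpleGraph.fromRel fun a b =>
    (∃ i j : Fin r, a = Sum.inl i ∧ b = Sum.inl j ∧ (cycleGraph r).Adj i j) ∨
    (∃ j : Fin t, a = Sum.inl (f j) ∧ b = Sum.inr j)

/-- The canonical member `U_{r,t}` of `𝒰_{r,t}` (for `t ≤ r`): the cycle `C_r` with one
pendant vertex attached to each of its first `t` vertices. -/
def graphUrt (r t : ℕ) (h : t ≤ r) : SimpleGraph (Fin r ⊕ Fin t) :=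
  graphUrtF r t (Fin.castLE h)

/-- A caterpillar: a tree in which deleting all vertices of degree 1 leaves a path. -/
def IsCaterpillar {V : Type*} [Fintype V] (G : SimpleGraph V) : Prop :=
  G.IsTree ∧ ∃ m : ℕ,
    Nonempty ((G.induce {v | 2 ≤ (G.neighborSet v).ncard}) ≃g SimpleGraph.pathGraph m)

/-- The graph `G₁` obtained from `U` by adding `k` new pendant vertices
`v₁ = Sum.inr 0, …, v_k = Sum.inr (k-1)`, each adjacent to `w`. -/
def addPendants {V : Type*} (U : SimpleGraph V) (w : V) (k : ℕ) : SimpleGraph (V ⊕ Fin k) :=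
  SimpleGraph.fromRel fun a b =>
    (∃ x y, a = Sum.inl x ∧ b = Sum.inl y ∧ U.Adj x y) ∨
    (∃ j : Fin k, a = Sum.inl w ∧ b = Sum.inr j)

/-- The graph `G₂ = G₁ - w v_k + v₁ v_k`: obtained from `U` by attaching the pendant vertices
`v₁, …, v_{k-1}` to `w` and the vertex `v_k` to `v₁`. -/
def swapPendant {V : Type*} (U : SimpleGraph V) (w : V) (k : ℕ) : SimpleGraph (V ⊕ Fin k) :=
  SimpleGraph.fromRel fun a b =>
    (∃ x y, a = Sum.inl x ∧ b = Sum.inl y ∧ U.Adj x y) ∨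
    (∃ j : Fin k, j.val < k - 1 ∧ a = Sum.inl w ∧ b = Sum.inr j) ∨
    (∃ j₀ j₁ : Fin k, j₀.val = 0 ∧ j₁.val = k - 1 ∧ a = Sum.inr j₀ ∧ b = Sum.inr j₁)

/-- The graph obtained from `H` by attaching a pendant path of length 2 at `w`:
two new vertices `v = Sum.inr 0` and `u = Sum.inr 1` with edges `w v` and `v u`. -/
def addPath2 {V : Type*} (H : SimpleGraph V) (w : V) : SimpleGraph (V ⊕ Fin 2) :=
  SimpleGraph.fromRel fun a b =>
    (∃ x y, a = Sum.inl x ∧ b = Sum.inl y ∧ H.Adj x y) ∨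
    (a = Sum.inl w ∧ b = Sum.inr 0) ∨
    (a = Sum.inr 0 ∧ b = Sum.inr 1)


/-!
Every maximal dissociation set `S` of an induced subgraph `G` of a finite graph `H` is the trace
of a maximal dissociation set of `H`: extend `S` to a maximal `T` in `H`, and the trace of `T`
contains `S` and is still a dissociation set, so it is `S`. Hence `φ(H) ≥ φ(G) + b`, where `b`
counts the maximal dissociation sets of `H` whose trace on `G` is not maximal. For
`P_m ⊆ C_{m+1}` with `m ≥ 6` there are two of them: extend `{m, 0, 3, 4}` and its mirror image
`{m, m-1, m-4, m-5}`. In the first, vertices `1` and `2` are excluded by the partners `0 ~ m` and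
`3 ~ 4`, but once `m` is deleted vertex `1` can join `0`; the mirror image is symmetric. For
`n = 4, 5, 6` the values `φ(P_{n-1}) = 3, 3, 4` and `φ(C_n) = 6, 5, 5` are computed directly.
-/

section Dissociation

variable {V W : Type*} {G : SimpleGraph V} {H : SimpleGraph W} {S T : Set V}

lemma IsDissoc.mono (hT : IsDissoc G T) (hST : S ⊆ T) : IsDissoc G S :=
  fun v hv _ hx _ hy => hT v (hST hv) ⟨hST hx.1, hx.2⟩ ⟨hST hy.1, hy.2⟩

lemma IsDissoc.notMem_of_adj (hS : IsDissoc G S) {a b c : V} (ha : a ∈ S) (hb : b ∈ S)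
    (hab : G.Adj a b) (hac : G.Adj a c) (hbc : b ≠ c) : c ∉ S :=
  fun hc => hbc (hS a ha ⟨hb, hab⟩ ⟨hc, hac⟩)

lemma IsDissoc.insert (hS : IsDissoc G S) {v : V} (hv : {x | x ∈ S ∧ G.Adj v x}.Subsingleton)
    (hnbr : ∀ x ∈ S, G.Adj v x → ∀ y ∈ S, ¬ G.Adj x y) : IsDissoc G (insert v S) := by
  rintro a (rfl | ha) x ⟨hx, hax⟩ y ⟨hy, hay⟩
  · exact hv ⟨hx.resolve_left (G.ne_of_adj hax).symm, hax⟩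
      ⟨hy.resolve_left (G.ne_of_adj hay).symm, hay⟩
  · rcases hx with rfl | hx <;> rcases hy with rfl | hy
    · rfl
    · exact absurd hay (hnbr a ha hax.symm y hy)
    · exact absurd hax (hnbr a ha hay.symm x hx)
    · exact hS a ha ⟨hx, hax⟩ ⟨hy, hay⟩

lemma IsDissoc.preimage (f : G ↪g H) {T : Set W} (hT : IsDissoc H T) :
    IsDissoc G (f ⁻¹' T) :=
  fun v hv _ hx _ hy => f.injective <|
    hT (f v) hv ⟨hx.1, f.map_adj_iff.2 hx.2⟩ ⟨hy.1, f.map_adj_iff.2 hy.2⟩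

lemma IsDissoc.image (f : G ↪g H) (hS : IsDissoc G S) : IsDissoc H (f '' S) := by
  rintro _ ⟨v, hv, rfl⟩ _ ⟨⟨x, hx, rfl⟩, hvx⟩ _ ⟨⟨y, hy, rfl⟩, hvy⟩
  exact congrArg f (hS v hv ⟨hx, f.map_adj_iff.1 hvx⟩ ⟨hy, f.map_adj_iff.1 hvy⟩)

lemma isMaxDissoc_iff_maximal : IsMaxDissoc G S ↔ Maximal (IsDissoc G) S :=
  and_congr_right fun _ =>
    forall₂_congr fun _ _ => ⟨fun h hST => (h hST).ge, fun h hST => hST.antisymm (h hST)⟩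

lemma isMaxDissoc_iff_forall_insert :
    IsMaxDissoc G S ↔ IsDissoc G S ∧ ∀ v ∉ S, ¬ IsDissoc G (insert v S) := by
  rw [isMaxDissoc_iff_maximal, Set.maximal_iff_forall_insert fun _ _ hT h => hT.mono h]

lemma IsDissoc.exists_isMaxDissoc_superset [Finite V] (hS : IsDissoc G S) :
    ∃ T, S ⊆ T ∧ IsMaxDissoc G T := by
  simpa only [isMaxDissoc_iff_maximal] using Finite.exists_le_maximal hS

lemma isDissoc_coe_finset_iff (A : Finset V) :
    IsDissoc G ↑A ↔ ∀ v ∈ A, ∀ x ∈ A, ∀ y ∈ A, G.Adj v x → G.Adj v y → x = y :=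
  ⟨fun h v hv _ hx _ hy hvx hvy => h v hv ⟨hx, hvx⟩ ⟨hy, hvy⟩,
    fun h v hv x hx y hy => h v hv x hx.1 y hy.1 hx.2 hy.2⟩

end Dissociation

section Restriction

variable {V W : Type*} [Finite W] {G : SimpleGraph V} {H : SimpleGraph W}

lemma surjOn_preimage_isMaxDissoc (f : G ↪g H) :
    Set.SurjOn (f ⁻¹' ·) {T | IsMaxDissoc H T ∧ IsMaxDissoc G (f ⁻¹' T)}
      {S | IsMaxDissoc G S} := by
  intro S hS
  obtain ⟨T, hST, hT⟩ := (hS.1.image f).exists_isMaxDissoc_superset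
  have hS_le : S ⊆ f ⁻¹' T := (Set.subset_preimage_image f S).trans (Set.preimage_mono hST)
  have hS_eq : S = f ⁻¹' T := hS.2 _ (hT.1.preimage f) hS_le
  exact ⟨T, ⟨hT, hS_eq ▸ hS⟩, hS_eq.symm⟩

lemma phi_add_ncard_le (f : G ↪g H) :
    phi G + ({T | IsMaxDissoc H T} \ {T | IsMaxDissoc G (f ⁻¹' T)}).ncard ≤ phi H := by
  have hgood : phi G ≤ ({T | IsMaxDissoc H T} ∩ {T | IsMaxDissoc G (f ⁻¹' T)}).ncard :=
    (Set.ncard_le_ncard (surjOn_preimage_isMaxDissoc f) (Set.toFinite _)).trans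
      (Set.ncard_image_le (Set.toFinite _))
  have hsplit := Set.ncard_inter_add_ncard_sdiff_eq_ncard {T | IsMaxDissoc H T}
    {T | IsMaxDissoc G (f ⁻¹' T)} (Set.toFinite _)
  unfold phi at hgood ⊢
  omega

/-- Deleting `v` leaves `u` without a partner in the trace, so `w` can be added to it. -/
lemma exists_isMaxDissoc_not_isMaxDissoc_preimage (f : G ↪g H) {v u w x y z : W}
    (hv : v ∉ Set.range f) (hw : w ∈ Set.range f) (hvw : v ≠ w) (hxz : x ≠ z)
    (hvu : H.Adj v u) (huw : H.Adj u w) (hyx : H.Adj y x) (hyz : H.Adj y z)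
    (hu_nbr : ∀ t, H.Adj u t → t = v ∨ t = w) (hw_nbr : ∀ t, H.Adj w t → t = u ∨ t = x)
    (hD : IsDissoc H {v, u, y, z}) :
    ∃ T, IsMaxDissoc H T ∧ v ∈ T ∧ u ∈ T ∧ ¬ IsMaxDissoc G (f ⁻¹' T) := by
  obtain ⟨T, hDT, hT⟩ := hD.exists_isMaxDissoc_superset
  have hvT : v ∈ T := hDT (by simp)
  have huT : u ∈ T := hDT (by simp)
  have hwT : w ∉ T := hT.1.notMem_of_adj huT hvT hvu.symm huw hvw
  have hxT : x ∉ T := hT.1.notMem_of_adj (hDT (by simp)) (hDT (by simp)) hyz hyx hxz.symm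
  have hw_nbr' : ∀ t ∈ T \ {v}, H.Adj w t → t = u := fun t ht hwt =>
    (hw_nbr t hwt).resolve_right fun h => hxT (h ▸ ht.1)
  have hins : IsDissoc H (insert w (T \ {v})) := by
    refine (hT.1.mono Set.sdiff_subset).insert ?_ ?_
    · exact fun a ha b hb => (hw_nbr' a ha.1 ha.2).trans (hw_nbr' b hb.1 hb.2).symm
    · rintro a ha hwa t ht hat
      rw [hw_nbr' a ha hwa] at hat
      rcases hu_nbr t hat with rfl | rfl
      exacts [ht.2 rfl, hwT ht.1]
  obtain ⟨w, rfl⟩ := hw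
  refine ⟨T, hT, hvT, huT, fun hmax => hwT ?_⟩
  have hpre : f ⁻¹' insert (f w) (T \ {v}) = insert w (f ⁻¹' T) := by
    ext a
    simp only [Set.mem_preimage, Set.mem_insert_iff, Set.mem_sdiff, Set.mem_singleton_iff,
      f.injective.eq_iff]
    exact or_congr_right (and_iff_left fun h => hv ⟨a, h⟩)
  exact (isMaxDissoc_iff_maximal.1 hmax).mem_of_prop_insert (hpre ▸ hins.preimage f)

end Restriction

instance {V : Type*} [DecidableEq V] {G : SimpleGraph V} [DecidableRel G.Adj] (A : Finset V) :
    Decidable (IsDissoc G ↑A) :=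
  decidable_of_iff _ (isDissoc_coe_finset_iff A).symm

lemma phi_eq_card_filter {V : Type*} [Fintype V] [DecidableEq V] (G : SimpleGraph V)
    [DecidableRel G.Adj] :
    phi G = (Finset.univ.filter fun A : Finset V =>
      IsDissoc G ↑A ∧ ∀ v ∉ A, ¬ IsDissoc G ↑(insert v A)).card := by
  rw [phi, ← Set.ncard_coe_finset, ← Set.ncard_image_of_injective _ Finset.coe_injective]
  congr 1
  ext S
  simp only [isMaxDissoc_iff_forall_insert, Finset.coe_filter, Finset.mem_univ, true_and,
    Set.mem_image, Set.mem_ofPred_eq]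
  constructor
  · intro hS
    refine ⟨S.toFinite.toFinset, ?_, S.toFinite.coe_toFinset⟩
    simpa [S.toFinite.coe_toFinset] using hS
  · rintro ⟨A, hA, rfl⟩
    simpa using hA

instance (n : ℕ) : DecidableRel (pathGraph n).Adj :=
  fun _ _ => decidable_of_iff _ pathGraph_adj.symm

lemma phi_pathGraph_three : phi (pathGraph 3) = 3 := by
  rw [phi_eq_card_filter]; decide

lemma phi_pathGraph_four : phi (pathGraph 4) = 3 := by
  rw [phi_eq_card_filter]; decide

lemma phi_pathGraph_five : phi (pathGraph 5) = 4 := by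
  rw [phi_eq_card_filter]; decide

lemma phi_cycleGraph_four : phi (cycleGraph 4) = 6 := by
  rw [phi_eq_card_filter]; decide

lemma phi_cycleGraph_five : phi (cycleGraph 5) = 5 := by
  rw [phi_eq_card_filter]; decide

lemma phi_cycleGraph_six : phi (cycleGraph 6) = 5 := by
  rw [phi_eq_card_filter]; decide

section Cycle

lemma cycleGraph_adj_iff_val {n : ℕ} (hn : 2 ≤ n) {u v : Fin n} :
    (cycleGraph n).Adj u v ↔ u.val + 1 = v.val ∨ v.val + 1 = u.val ∨
      (u.val = 0 ∧ v.val = n - 1) ∨ (v.val = 0 ∧ u.val = n - 1) := by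
  have hsub (a b : Fin n) :
      (a - b).val = 1 ↔ a.val = b.val + 1 ∨ (a.val = 0 ∧ b.val = n - 1) := by
    rcases le_or_gt b a with h | h
    · rw [Fin.sub_val_of_le h, Fin.le_def] at *; omega
    · rw [Fin.coe_sub_iff_lt.2 h, Fin.lt_def] at *; omega
  rw [cycleGraph_adj', hsub, hsub]
  omega

def pathGraphEmbCycleGraph (m : ℕ) : pathGraph m ↪g cycleGraph (m + 1) where
  toEmbedding := Fin.castSuccEmb
  map_rel_iff' {a b} := by
    have := a.pos
    simp only [Fin.coe_castSuccEmb, cycleGraph_adj_iff_val (by omega : 2 ≤ m + 1),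
      pathGraph_adj, Fin.val_castSucc]
    omega

variable {m : ℕ}

lemma last_notMem_range_pathGraphEmbCycleGraph :
    Fin.last m ∉ Set.range (pathGraphEmbCycleGraph m) :=
  fun ⟨a, ha⟩ => (Fin.castSucc_lt_last a).ne ha

lemma two_le_ncard_not_isMaxDissoc_preimage (hm : 6 ≤ m) :
    2 ≤ ({T | IsMaxDissoc (cycleGraph (m + 1)) T} \
      {T | IsMaxDissoc (pathGraph m) (pathGraphEmbCycleGraph m ⁻¹' T)}).ncard := by
  have hadj := @cycleGraph_adj_iff_val (m + 1) (by omega)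
  obtain ⟨T₁, hT₁, -, h0T₁, hbad₁⟩ := exists_isMaxDissoc_not_isMaxDissoc_preimage
    (pathGraphEmbCycleGraph m) (v := Fin.last m) (u := ⟨0, by omega⟩) (w := ⟨1, by omega⟩)
    (x := ⟨2, by omega⟩) (y := ⟨3, by omega⟩) (z := ⟨4, by omega⟩)
    last_notMem_range_pathGraphEmbCycleGraph ⟨⟨1, by omega⟩, rfl⟩
    (by simp [Fin.ext_iff]; omega) (by simp [Fin.ext_iff])
    (by simp [hadj]) (by simp [hadj]) (by simp [hadj]) (by simp [hadj])
    (by intro t ht; rw [hadj] at ht; simp only [Fin.ext_iff, Fin.val_last] at ht ⊢; omega)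
    (by intro t ht; rw [hadj] at ht; simp only [Fin.ext_iff] at ht ⊢; omega)
    (by
      intro a ha b ⟨hb, hab⟩ c ⟨hc, hac⟩
      rw [hadj] at hab hac
      simp only [Set.mem_insert_iff, Set.mem_singleton_iff, Fin.ext_iff, Fin.val_last]
        at ha hb hc ⊢
      omega)
  obtain ⟨T₂, hT₂, hlastT₂, hT₂', hbad₂⟩ := exists_isMaxDissoc_not_isMaxDissoc_preimage
    (pathGraphEmbCycleGraph m) (v := Fin.last m) (u := ⟨m - 1, by omega⟩)
    (w := ⟨m - 2, by omega⟩) (x := ⟨m - 3, by omega⟩) (y := ⟨m - 4, by omega⟩)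
    (z := ⟨m - 5, by omega⟩)
    last_notMem_range_pathGraphEmbCycleGraph ⟨⟨m - 2, by omega⟩, rfl⟩
    (by simp [Fin.ext_iff, Fin.val_last]; omega) (by simp [Fin.ext_iff]; omega)
    (by simp [hadj]; omega) (by simp [hadj]; omega)
    (by simp [hadj]; omega) (by simp [hadj]; omega)
    (by intro t ht; rw [hadj] at ht; simp only [Fin.ext_iff, Fin.val_last] at ht ⊢; omega)
    (by intro t ht; rw [hadj] at ht; simp only [Fin.ext_iff] at ht ⊢; omega)
    (by
      intro a ha b ⟨hb, hab⟩ c ⟨hc, hac⟩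
      rw [hadj] at hab hac
      simp only [Set.mem_insert_iff, Set.mem_singleton_iff, Fin.ext_iff, Fin.val_last]
        at ha hb hc ⊢
      omega)
  refine (Set.one_lt_ncard_iff (Set.toFinite _)).2 ⟨T₁, T₂, ⟨hT₁, hbad₁⟩, ⟨hT₂, hbad₂⟩, ?_⟩
  rintro rfl
  exact hT₂.1.notMem_of_adj hlastT₂ hT₂' (by simp [hadj]; omega) (by simp [hadj])
    (by simp [Fin.ext_iff]; omega) h0T₁

end Cycle

/-- for `n ≥ 4`, `φ(C_n) ≥ φ(P_{n-1}) + 1`, with equality iff `n = 6`. -/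
theorem stmt11 (n : ℕ) (hn : 4 ≤ n) :
    phi (SimpleGraph.pathGraph (n - 1)) + 1 ≤ phi (cycleGraph n) ∧
      (phi (cycleGraph n) = phi (SimpleGraph.pathGraph (n - 1)) + 1 ↔ n = 6) := by
  obtain ⟨m, rfl⟩ : ∃ m, n = m + 1 := ⟨n - 1, by omega⟩
  rw [Nat.add_sub_cancel]
  rcases (by omega : m = 3 ∨ m = 4 ∨ m = 5 ∨ 6 ≤ m) with rfl | rfl | rfl | hm
  · rw [phi_pathGraph_three, phi_cycleGraph_four]; omega
  · rw [phi_pathGraph_four, phi_cycleGraph_five]; omega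
  · rw [phi_pathGraph_five, phi_cycleGraph_six]; omega
  · have hle := phi_add_ncard_le (pathGraphEmbCycleGraph m)
    have hbad := two_le_ncard_not_isMaxDissoc_preimage hm
    omega
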